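/- Let Φ be an n × n symmetric positive semidefinite matrix with eigenvalues σ₁ ≥ ... ≥ σ_n ≥ 0 and top-r eigenvector matrix Z_true (n × r, orthonormal columns), assuming σ_r > σ_{r+1}. For any n × r matrix Z with orthonormal columns, one exact noiseless power iteration Z₊ = QR(Φ Z) satisfies: the r-th principal angle does not increase, i.e., σ_r(Z₊ᵀ Z_true) ≥ σ_r(Zᵀ Z_true), provided σ_r(Zᵀ Z_true) > 0. -/

import Mathlib

/-!
Split `u = V a + e` with `Vᵀ e = 0`. As `range V` is `Φ`-invariant and `Φ` is symmetric,
`Φ u = V (D a) + Φ e` with `Vᵀ (Φ e) = 0`, while `‖D a‖ ≥ μ ‖a‖` and `‖Φ e‖ ≤ μ ‖e‖`: the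
component in `range V` is stretched at least as much as the orthogonal one, so the cosine of the
angle between `u` and `range V` cannot decrease under `Φ`. Since `R` is invertible,
`range Z₊ = Φ (range Z)`, and `σ_r(Zᵀ Z_true) = σ_min(Z_trueᵀ Z)` is the smallest such cosine
over unit `u ∈ range Z`.
-/

open scoped BigOperators

/-- Euclidean norm of a finite real vector. -/
noncomputable def euclNorm {ι : Type*} [Fintype ι] (v : ι → ℝ) : ℝ :=
  Real.sqrt (∑ i, (v i) ^ 2)

/-- Frobenius norm of a real matrix. -/
noncomputable def frobNorm {ι κ : Type*} [Fintype ι] [Fintype κ] (M : Matrix ι κ ℝ) : ℝ :=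
  Real.sqrt (∑ i, ∑ j, (M i j) ^ 2)

/-- Operator (spectral) norm of a real matrix: the largest singular value. -/
noncomputable def specNorm {ι κ : Type*} [Fintype ι] [Fintype κ] (M : Matrix ι κ ℝ) : ℝ :=
  sSup {c | ∃ v : κ → ℝ, euclNorm v = 1 ∧ c = euclNorm (M.mulVec v)}

/-- Smallest singular value of a (tall or square) real matrix:
the infimum of `‖M v‖` over unit vectors `v`. -/
noncomputable def sminNorm {ι κ : Type*} [Fintype ι] [Fintype κ] (M : Matrix ι κ ℝ) : ℝ :=
  sInf {c | ∃ v : κ → ℝ, euclNorm v = 1 ∧ c = euclNorm (M.mulVec v)}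

/-- The `k`-th largest singular value of a real matrix, via the Courant–Fischer
max–min characterization. -/
noncomputable def sval {ι κ : Type*} [Fintype ι] [Fintype κ] (M : Matrix ι κ ℝ) (k : ℕ) : ℝ :=
  sSup {c | ∃ V : Submodule ℝ (κ → ℝ), Module.finrank ℝ V = k ∧
    c = sInf {d | ∃ v ∈ V, euclNorm v = 1 ∧ d = euclNorm (M.mulVec v)}}

open Matrix

section EuclNorm

variable {ι : Type*} [Fintype ι]

theorem euclNorm_eq_norm (v : ι → ℝ) : euclNorm v = ‖WithLp.toLp 2 v‖ := by
  simp [euclNorm, EuclideanSpace.norm_eq]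

theorem euclNorm_nonneg (v : ι → ℝ) : 0 ≤ euclNorm v := Real.sqrt_nonneg _

theorem euclNorm_eq_zero {v : ι → ℝ} : euclNorm v = 0 ↔ v = 0 := by
  rw [euclNorm_eq_norm, norm_eq_zero, WithLp.toLp_eq_zero]

theorem euclNorm_pos {v : ι → ℝ} : 0 < euclNorm v ↔ v ≠ 0 :=
  (euclNorm_nonneg v).lt_iff_ne'.trans euclNorm_eq_zero.not

theorem euclNorm_smul (t : ℝ) (v : ι → ℝ) : euclNorm (t • v) = |t| * euclNorm v := by
  rw [euclNorm_eq_norm, euclNorm_eq_norm, WithLp.toLp_smul, norm_smul, Real.norm_eq_abs]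

theorem euclNorm_sq (v : ι → ℝ) : euclNorm v ^ 2 = v ⬝ᵥ v := by
  rw [euclNorm, Real.sq_sqrt (by positivity)]
  simp [dotProduct, sq]

theorem dotProduct_le_euclNorm_mul_euclNorm (v w : ι → ℝ) :
    v ⬝ᵥ w ≤ euclNorm v * euclNorm w := by
  simpa [euclNorm_eq_norm, EuclideanSpace.inner_toLp_toLp, dotProduct_comm] using
    real_inner_le_norm (WithLp.toLp 2 v) (WithLp.toLp 2 w)

theorem exists_euclNorm_eq_one [Nonempty ι] : ∃ v : ι → ℝ, euclNorm v = 1 := by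
  classical
  inhabit ι
  exact ⟨Pi.single default 1, by simp [euclNorm, Pi.single_apply]⟩

end EuclNorm

section OrthonormalColumns

variable {ι κ : Type*} [Fintype ι] [Fintype κ] [DecidableEq κ] {V : Matrix ι κ ℝ}

theorem euclNorm_mulVec_of_transpose_mul_self (hV : Vᵀ * V = 1) (x : κ → ℝ) :
    euclNorm (V *ᵥ x) = euclNorm x := by
  rw [← sq_eq_sq₀ (euclNorm_nonneg _) (euclNorm_nonneg _), euclNorm_sq, euclNorm_sq,
    ← dotProduct_transpose_mulVec, mulVec_mulVec, hV, one_mulVec]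

theorem euclNorm_mulVec_add_sq_of_transpose_mulVec_eq_zero (hV : Vᵀ * V = 1) (x : κ → ℝ)
    {y : ι → ℝ} (hy : Vᵀ *ᵥ y = 0) :
    euclNorm (V *ᵥ x + y) ^ 2 = euclNorm x ^ 2 + euclNorm y ^ 2 := by
  have hxy : (V *ᵥ x) ⬝ᵥ y = 0 := by
    rw [dotProduct_comm, ← dotProduct_transpose_mulVec, hy, dotProduct_zero]
  rw [euclNorm_sq, add_dotProduct, dotProduct_add, dotProduct_add, dotProduct_comm y, hxy,
    ← euclNorm_sq, euclNorm_mulVec_of_transpose_mul_self hV, euclNorm_sq, euclNorm_sq]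
  ring

end OrthonormalColumns

section SminNorm

variable {ι ι' κ : Type*} [Fintype ι] [Fintype ι'] [Fintype κ]

theorem sminNorm_nonneg (M : Matrix ι κ ℝ) : 0 ≤ sminNorm M :=
  Real.sInf_nonneg (by rintro _ ⟨v, -, rfl⟩; exact euclNorm_nonneg _)

theorem sminNorm_le_euclNorm_mulVec (M : Matrix ι κ ℝ) {v : κ → ℝ} (hv : euclNorm v = 1) :
    sminNorm M ≤ euclNorm (M *ᵥ v) :=
  csInf_le ⟨0, by rintro _ ⟨v, -, rfl⟩; exact euclNorm_nonneg _⟩ ⟨v, hv, rfl⟩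

theorem sminNorm_mul_euclNorm_le (M : Matrix ι κ ℝ) (x : κ → ℝ) :
    sminNorm M * euclNorm x ≤ euclNorm (M *ᵥ x) := by
  rcases eq_or_ne x 0 with rfl | hx
  · simp [euclNorm_eq_zero.2]
  have hx' : 0 < euclNorm x := euclNorm_pos.2 hx
  have hunit : euclNorm ((euclNorm x)⁻¹ • x) = 1 := by
    rw [euclNorm_smul, abs_inv, abs_of_pos hx', inv_mul_cancel₀ hx'.ne']
  have h := sminNorm_le_euclNorm_mulVec M hunit
  rwa [mulVec_smul, euclNorm_smul, abs_inv, abs_of_pos hx', le_inv_mul_iff₀ hx', mul_comm] at h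

theorem sminNorm_le_sminNorm {M : Matrix ι κ ℝ} {N : Matrix ι' κ ℝ}
    (h : ∀ v, euclNorm v = 1 → sminNorm M ≤ euclNorm (N *ᵥ v)) : sminNorm M ≤ sminNorm N := by
  rcases isEmpty_or_nonempty κ with hκ | hκ
  · -- there are no unit vectors, so both sides are `sInf ∅ = 0`
    simp [sminNorm, euclNorm]
  obtain ⟨v, hv⟩ := exists_euclNorm_eq_one (ι := κ)
  exact le_csInf ⟨_, v, hv, rfl⟩ (by rintro _ ⟨w, hw, rfl⟩; exact h w hw)

theorem sminNorm_le_sminNorm_transpose (M : Matrix κ κ ℝ) : sminNorm M ≤ sminNorm Mᵀ := by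
  classical
  refine sminNorm_le_sminNorm fun w hw => ?_
  rcases (sminNorm_nonneg M).eq_or_lt with hc | hc
  · exact hc ▸ euclNorm_nonneg _
  have hinj : Function.Injective M.mulVec := fun x y hxy => by
    have h := sminNorm_mul_euclNorm_le M (x - y)
    rw [mulVec_sub, hxy, sub_self, euclNorm_eq_zero.2 rfl] at h
    exact sub_eq_zero.1 <| euclNorm_eq_zero.1 <|
      le_antisymm (nonpos_of_mul_nonpos_right h hc) (euclNorm_nonneg _)
  obtain ⟨x, rfl⟩ := mulVec_surjective_iff_isUnit.2 (mulVec_injective_iff_isUnit.1 hinj) w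
  set c := sminNorm M
  calc c = c * ((M *ᵥ x) ⬝ᵥ (M *ᵥ x)) := by rw [← euclNorm_sq, hw]; ring
    _ = c * (x ⬝ᵥ (Mᵀ *ᵥ (M *ᵥ x))) := by rw [dotProduct_transpose_mulVec]
    _ ≤ c * (euclNorm x * euclNorm (Mᵀ *ᵥ (M *ᵥ x))) := by
      gcongr; exact dotProduct_le_euclNorm_mul_euclNorm _ _
    _ = c * euclNorm x * euclNorm (Mᵀ *ᵥ (M *ᵥ x)) := by ring
    _ ≤ 1 * euclNorm (Mᵀ *ᵥ (M *ᵥ x)) := by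
      gcongr
      · exact euclNorm_nonneg _
      · exact hw ▸ sminNorm_mul_euclNorm_le M x
    _ = euclNorm (Mᵀ *ᵥ (M *ᵥ x)) := one_mul _

theorem sminNorm_transpose (M : Matrix κ κ ℝ) : sminNorm Mᵀ = sminNorm M :=
  le_antisymm (by simpa using sminNorm_le_sminNorm_transpose Mᵀ) (sminNorm_le_sminNorm_transpose M)

theorem sval_card_eq_sminNorm (M : Matrix ι κ ℝ) : sval M (Fintype.card κ) = sminNorm M := by
  have hcand : {c | ∃ V : Submodule ℝ (κ → ℝ), Module.finrank ℝ V = Fintype.card κ ∧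
      c = sInf {d | ∃ v ∈ V, euclNorm v = 1 ∧ d = euclNorm (M *ᵥ v)}} = {sminNorm M} := by
    ext c
    constructor
    · rintro ⟨V, hV, rfl⟩
      obtain rfl : V = ⊤ := Submodule.eq_top_of_finrank_eq (by simpa using hV)
      simp [sminNorm]
    · rintro rfl
      exact ⟨⊤, by simp, by simp [sminNorm]⟩
  rw [sval, hcand, csSup_singleton]

end SminNorm

section SpectralGap

variable {ι κ : Type*} [Fintype ι] [Fintype κ] [DecidableEq κ]

theorem sq_mul_euclNorm_sq_le_euclNorm_diagonal_mulVec_sq {d : κ → ℝ} {μ : ℝ} (hμ0 : 0 ≤ μ)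
    (hd : ∀ i, μ ≤ d i) (a : κ → ℝ) :
    μ ^ 2 * euclNorm a ^ 2 ≤ euclNorm (diagonal d *ᵥ a) ^ 2 := by
  simp only [euclNorm_sq, dotProduct, mulVec_diagonal, Finset.mul_sum]
  refine Finset.sum_le_sum fun i _ => ?_
  have : μ ^ 2 ≤ d i ^ 2 := pow_le_pow_left₀ hμ0 (hd i) 2
  nlinarith [mul_self_nonneg (a i)]

theorem cos_bound_mulVec_of_spectral_gap {Φ : Matrix ι ι ℝ} (hΦ : Φᵀ = Φ)
    {V : Matrix ι κ ℝ} (hV : Vᵀ * V = 1) {d : κ → ℝ} (hinv : Φ * V = V * diagonal d)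
    {μ : ℝ} (hμ0 : 0 ≤ μ) (hd : ∀ i, μ ≤ d i)
    (hcompl : ∀ v, Vᵀ *ᵥ v = 0 → euclNorm (Φ *ᵥ v) ≤ μ * euclNorm v)
    {c : ℝ} (hc : 0 ≤ c) {u : ι → ℝ} (hu : c * euclNorm u ≤ euclNorm (Vᵀ *ᵥ u)) :
    c * euclNorm (Φ *ᵥ u) ≤ euclNorm (Vᵀ *ᵥ (Φ *ᵥ u)) := by
  rcases eq_or_ne u 0 with rfl | hu0
  · simp [euclNorm_eq_zero.2]
  set a := Vᵀ *ᵥ u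
  set e := u - V *ᵥ a with he_def
  have hae : V *ᵥ a + e = u := add_sub_cancel _ _
  have he : Vᵀ *ᵥ e = 0 := by rw [he_def, mulVec_sub, mulVec_mulVec, hV, one_mulVec, sub_self]
  have hVΦ : Vᵀ * Φ = diagonal d * Vᵀ := by
    simpa [transpose_mul, hΦ] using congrArg transpose hinv
  have hΦe : Vᵀ *ᵥ (Φ *ᵥ e) = 0 := by
    rw [mulVec_mulVec, hVΦ, ← mulVec_mulVec, he, mulVec_zero]
  have hΦu : Φ *ᵥ u = V *ᵥ (diagonal d *ᵥ a) + Φ *ᵥ e := by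
    rw [← hae, mulVec_add, mulVec_mulVec, hinv, ← mulVec_mulVec]
  have hproj : Vᵀ *ᵥ (Φ *ᵥ u) = diagonal d *ᵥ a := by
    rw [hΦu, mulVec_add, hΦe, add_zero, mulVec_mulVec, hV, one_mulVec]
  have hu_sq : euclNorm u ^ 2 = euclNorm a ^ 2 + euclNorm e ^ 2 := by
    rw [← euclNorm_mulVec_add_sq_of_transpose_mulVec_eq_zero hV a he, hae]
  have hΦu_sq :
      euclNorm (Φ *ᵥ u) ^ 2 = euclNorm (diagonal d *ᵥ a) ^ 2 + euclNorm (Φ *ᵥ e) ^ 2 := by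
    rw [hΦu, euclNorm_mulVec_add_sq_of_transpose_mulVec_eq_zero hV _ hΦe]
  have hΦe_sq : euclNorm (Φ *ᵥ e) ^ 2 ≤ μ ^ 2 * euclNorm e ^ 2 := by
    rw [← mul_pow]; exact pow_le_pow_left₀ (euclNorm_nonneg _) (hcompl e he) 2
  have hDa_sq := sq_mul_euclNorm_sq_le_euclNorm_diagonal_mulVec_sq hμ0 hd a
  have hca_sq : c ^ 2 * (euclNorm a ^ 2 + euclNorm e ^ 2) ≤ euclNorm a ^ 2 := by
    rw [← hu_sq, ← mul_pow]; exact pow_le_pow_left₀ (mul_nonneg hc (euclNorm_nonneg _)) hu 2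
  have hc1 : c ^ 2 ≤ 1 := by
    have hu_pos : 0 < euclNorm a ^ 2 + euclNorm e ^ 2 := hu_sq ▸ pow_pos (euclNorm_pos.2 hu0) 2
    nlinarith [sq_nonneg (euclNorm e)]
  have hce : c ^ 2 * euclNorm e ^ 2 ≤ (1 - c ^ 2) * euclNorm a ^ 2 := by linarith
  rw [← pow_le_pow_iff_left₀ (mul_nonneg hc (euclNorm_nonneg _)) (euclNorm_nonneg _) two_ne_zero,
    mul_pow, hproj, hΦu_sq]
  -- c²‖Φe‖² ≤ c²μ²‖e‖² ≤ (1 - c²)μ²‖a‖² ≤ (1 - c²)‖Da‖²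
  linarith [mul_le_mul_of_nonneg_left hΦe_sq (sq_nonneg c),
    mul_le_mul_of_nonneg_left hce (sq_nonneg μ),
    mul_le_mul_of_nonneg_left hDa_sq (sub_nonneg.2 hc1)]

end SpectralGap

theorem power_iteration_angle_monotone_general {n r : ℕ}
    (Φ : Matrix (Fin n) (Fin n) ℝ) (hΦsym : Φ.transpose = Φ)
    (Ztrue : Matrix (Fin n) (Fin r) ℝ) (hZt : Ztrue.transpose * Ztrue = 1)
    (d : Fin r → ℝ) (hinv : Φ * Ztrue = Ztrue * Matrix.diagonal d)
    (μ : ℝ) (hμ0 : 0 ≤ μ)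
    (hcompl : ∀ v : Fin n → ℝ, Ztrue.transpose.mulVec v = 0 →
      euclNorm (Φ.mulVec v) ≤ μ * euclNorm v)
    (hgap : ∀ i, μ < d i)
    (Z Zplus : Matrix (Fin n) (Fin r) ℝ) (hZ : Z.transpose * Z = 1)
    (R : Matrix (Fin r) (Fin r) ℝ)
    (hQR : Φ * Z = Zplus * R) (hZp : Zplus.transpose * Zplus = 1)
    (hRtri : ∀ i j : Fin r, j < i → R i j = 0) (hRdiag : ∀ i, 0 < R i i) :
    sval (Z.transpose * Ztrue) r ≤ sval (Zplus.transpose * Ztrue) r := by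
  have hsval (M : Matrix (Fin r) (Fin r) ℝ) : sval M r = sminNorm M := by
    rw [← sval_card_eq_sminNorm, Fintype.card_fin]
  rw [hsval, hsval, ← sminNorm_transpose (Zᵀ * Ztrue), ← sminNorm_transpose (Zplusᵀ * Ztrue)]
  simp only [transpose_mul, transpose_transpose]
  have hR : IsUnit R := by
    rw [isUnit_iff_isUnit_det, det_of_isUpperTriangular hRtri]
    exact (Finset.prod_pos fun i _ => hRdiag i).ne'.isUnit
  refine sminNorm_le_sminNorm fun w hw => ?_
  obtain ⟨b, rfl⟩ := mulVec_surjective_iff_isUnit.2 hR w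
  have hstep : Φ *ᵥ (Z *ᵥ b) = Zplus *ᵥ (R *ᵥ b) := by
    rw [mulVec_mulVec, hQR, ← mulVec_mulVec]
  have hcos : sminNorm (Ztrueᵀ * Z) * euclNorm (Z *ᵥ b) ≤ euclNorm (Ztrueᵀ *ᵥ (Z *ᵥ b)) := by
    rw [euclNorm_mulVec_of_transpose_mul_self hZ, mulVec_mulVec]
    exact sminNorm_mul_euclNorm_le _ b
  have h := cos_bound_mulVec_of_spectral_gap hΦsym hZt hinv hμ0 (fun i => (hgap i).le) hcompl
    (sminNorm_nonneg _) hcos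
  rwa [hstep, euclNorm_mulVec_of_transpose_mul_self hZp, hw, mul_one, mulVec_mulVec] at h

/-- Monotonicity of the `r`-th principal angle under one exact power iteration:
for symmetric PSD `Φ` with invariant top-`r` eigenspace `Z_true` (eigenvalues
`d i`, all exceeding the bound `μ` of `Φ` on the orthogonal complement, i.e.
`σ_r > σ_{r+1}`), if `Φ Z = Z₊ R` is a QR decomposition then
`σ_r(Z₊ᵀ Z_true) ≥ σ_r(Zᵀ Z_true)` whenever `σ_r(Zᵀ Z_true) > 0`. -/
theorem power_iteration_angle_monotone {n r : ℕ}
    (Φ : Matrix (Fin n) (Fin n) ℝ) (hΦsym : Φ.transpose = Φ)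
    (hΦpsd : Φ.PosSemidef)
    (Ztrue : Matrix (Fin n) (Fin r) ℝ) (hZt : Ztrue.transpose * Ztrue = 1)
    (d : Fin r → ℝ) (hinv : Φ * Ztrue = Ztrue * Matrix.diagonal d)
    (μ : ℝ) (hμ0 : 0 ≤ μ)
    (hcompl : ∀ v : Fin n → ℝ, Ztrue.transpose.mulVec v = 0 →
      euclNorm (Φ.mulVec v) ≤ μ * euclNorm v)
    (hgap : ∀ i, μ < d i)
    (Z Zplus : Matrix (Fin n) (Fin r) ℝ) (hZ : Z.transpose * Z = 1)
    (R : Matrix (Fin r) (Fin r) ℝ)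
    (hQR : Φ * Z = Zplus * R) (hZp : Zplus.transpose * Zplus = 1)
    (hRtri : ∀ i j : Fin r, j < i → R i j = 0) (hRdiag : ∀ i, 0 < R i i)
    (hpos : 0 < sval (Z.transpose * Ztrue) r) :
    sval (Z.transpose * Ztrue) r ≤ sval (Zplus.transpose * Ztrue) r :=
  power_iteration_angle_monotone_general Φ hΦsym Ztrue hZt d hinv μ hμ0 hcompl hgap Z Zplus hZ R hQR
    hZp hRtri hRdiag
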